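/- Let r, s ∈ ℕ with 1 ≤ s ≤ r or s = 0 ≤ r, r ≥ 1, let 1 ≤ λ_1 < ⋯ < λ_s ≤ r, and let a_1,…,a_r, b_1,…,b_s be positive real numbers satisfying b_j > a_i whenever i ≤ λ_j and b_j > a_i − 1 whenever i ≥ λ_j + 1 (for all 1 ≤ i ≤ r, 1 ≤ j ≤ s). Let P_n(x) = Σ_{k=0}^{n} (−1)^k C(n,k) [ ∏_{i=1}^{r} (a_i + n − k)_k / ∏_{j=1}^{s} (b_j^{(n−1)} + n − k)_k ] x^{n−k} with b_j^{(n−1)} = b_j + ⌈(n−λ_j)/r⌉. Define F : ℂ → ℂ by F(z) = Σ_{k=0}^{∞} (−z/r^s)^k / ( k! · ∏_{i=1}^{r} (a_i)_k ) (the entire function 0F_r(; a_1,…,a_r; −z/r^s)). Then the sequence of functions z ↦ (−1)^n [ ∏_{j=1}^{s} (b_j^{(n−1)})_n / ∏_{i=1}^{r} (a_i)_n ] · P_n(z / n^{s+1}) converges to F as n → ∞, uniformly on every compact subset of ℂ. -/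

import Mathlib

open Finset Polynomial Filter

/-- The type II multiple orthogonal polynomials on the step-line (case `r ≥ s`, `m = r`):
`P_n(x) = Σ_{k=0}^{n} (−1)^k C(n,k) [∏_i (a_i+n−k)_k / ∏_j (b_j^{(n−1)}+n−k)_k] x^{n−k}`
with `b_j^{(n−1)} = b_j + ⌈(n−λ_j)/r⌉`. -/
noncomputable def polyP (r s : ℕ) (lam : ℕ → ℕ) (a b : ℕ → ℝ) (n : ℕ) : Polynomial ℝ :=
  ∑ k ∈ Finset.range (n + 1),
    Polynomial.C ((-1) ^ k * (n.choose k : ℝ) *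
        (∏ i ∈ Finset.Icc 1 r,
          (ascPochhammer ℝ k).eval (a i + ((n - k : ℕ) : ℝ))) /
        ∏ j ∈ Finset.Icc 1 s,
          (ascPochhammer ℝ k).eval
            (b j + ((⌈(((n : ℤ) - (lam j : ℤ) : ℤ) : ℚ) / (r : ℚ)⌉ : ℤ) : ℝ) +
              ((n - k : ℕ) : ℝ))) *
      Polynomial.X ^ (n - k)

/-!
Expanding `P_n(z / n^{s+1})` in powers of `z`, the splitting `(x)_n = (x)_m (x + m)_{n-m}`
cancels the normalising factor against the coefficients of `P_n`, and the rescaled polynomial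
becomes `∑_m (-1)^m c_{n,m} z^m` with
`c_{n,m} = C(n,m) ∏_j (b_j^{(n-1)})_m / (∏_i (a_i)_m n^{(s+1)m})` (`mehlerCoeff`).
Since `C(n,m) ~ n^m / m!` and `b_j^{(n-1)} ~ n / r`, each `c_{n,m}` tends to the coefficient
`r^{-sm} / (m! ∏_i (a_i)_m)` of `F`. Moreover `c_{n,m} ≤ C^m / m!` with `C` independent of `n`,
so Tannery's theorem gives uniform convergence on every disc.
-/

open Topology

section Tannery

variable {𝕜 : Type*} [NormedField 𝕜] [CompleteSpace 𝕜]

theorem tendstoUniformlyOn_tsum_mul_pow_of_dominated {c : ℕ → ℕ → 𝕜} {c' : ℕ → 𝕜}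
    {M : ℕ → ℝ} {R : ℝ} (hR : 0 ≤ R) (hM : Summable fun m ↦ M m * R ^ m)
    (hc : ∀ m, Tendsto (c · m) atTop (𝓝 (c' m)))
    (hcM : ∀ᶠ n in atTop, ∀ m, ‖c n m‖ ≤ M m) :
    TendstoUniformlyOn (fun n z ↦ ∑' m, c n m * z ^ m) (fun z ↦ ∑' m, c' m * z ^ m) atTop
      (Metric.closedBall 0 R) := by
  have hc'M : ∀ m, ‖c' m‖ ≤ M m := fun m ↦
    le_of_tendsto (tendsto_norm.comp (hc m)) (hcM.mono fun n h ↦ h m)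
  have hM2 : Summable fun m ↦ 2 * (M m * R ^ m) := hM.mul_left 2
  have herr_le : ∀ᶠ n in atTop, ∀ m, ‖c' m - c n m‖ * R ^ m ≤ 2 * (M m * R ^ m) := by
    filter_upwards [hcM] with n hn m
    have := norm_sub_le (c' m) (c n m)
    nlinarith [hc'M m, hn m, pow_nonneg hR m]
  have herr : Tendsto (fun n ↦ ∑' m, ‖c' m - c n m‖ * R ^ m) atTop (𝓝 0) := by
    rw [← tsum_zero]
    refine tendsto_tsum_of_dominated_convergence hM2 (fun m ↦ ?_) ?_
    · simpa using ((tendsto_const_nhds (x := c' m)).sub (hc m)).norm.mul_const (R ^ m)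
    · filter_upwards [herr_le] with n hn m
      rw [Real.norm_of_nonneg (by positivity)]
      exact hn m
  rw [Metric.tendstoUniformlyOn_iff]
  intro ε hε
  filter_upwards [herr.eventually (gt_mem_nhds hε), herr_le, hcM] with n hn hle hnM z hz
  have hzR : ‖z‖ ≤ R := by simpa using hz
  have hterm : ∀ m, ‖(c' m - c n m) * z ^ m‖ ≤ ‖c' m - c n m‖ * R ^ m := fun m ↦ by
    rw [norm_mul, norm_pow]
    gcongr
  have hsum_err : Summable fun m ↦ ‖c' m - c n m‖ * R ^ m :=
    hM2.of_nonneg_of_le (fun m ↦ by positivity) hle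
  have hsum : ∀ d : ℕ → 𝕜, (∀ m, ‖d m‖ ≤ M m) → Summable fun m ↦ d m * z ^ m :=
    fun d hd ↦ hM.of_norm_bounded fun m ↦ by
      rw [norm_mul, norm_pow]
      exact mul_le_mul (hd m) (pow_le_pow_left₀ (norm_nonneg z) hzR m) (by positivity)
        ((norm_nonneg _).trans (hd m))
  have hsum_norm : Summable fun m ↦ ‖(c' m - c n m) * z ^ m‖ :=
    hsum_err.of_nonneg_of_le (fun m ↦ norm_nonneg _) hterm
  rw [dist_eq_norm, ← (hsum c' hc'M).tsum_sub (hsum (c n) hnM)]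
  simp_rw [← sub_mul]
  calc ‖∑' m, (c' m - c n m) * z ^ m‖ ≤ ∑' m, ‖(c' m - c n m) * z ^ m‖ :=
        norm_tsum_le_tsum_norm hsum_norm
    _ ≤ ∑' m, ‖c' m - c n m‖ * R ^ m := hsum_norm.tsum_le_tsum hterm hsum_err
    _ < ε := hn

end Tannery

theorem pow_le_ascPochhammer_eval {x : ℝ} (hx : 0 ≤ x) (m : ℕ) :
    x ^ m ≤ (ascPochhammer ℝ m).eval x := by
  induction m with
  | zero => simp
  | succ m ih =>
    rw [ascPochhammer_succ_eval, pow_succ]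
    exact mul_le_mul ih (le_add_of_nonneg_right m.cast_nonneg) hx
      ((pow_nonneg hx m).trans ih)

theorem ascPochhammer_eval_le_pow {x : ℝ} (hx : 0 ≤ x) (m : ℕ) :
    (ascPochhammer ℝ m).eval x ≤ (x + m) ^ m := by
  induction m with
  | zero => simp
  | succ m ih =>
    rw [ascPochhammer_succ_eval, pow_succ]
    push_cast
    gcongr
    · exact ih.trans (pow_le_pow_left₀ (by positivity) (by linarith) m)
    · linarith

theorem ascPochhammer_eval_eq_mul_eval_add {S : Type*} [CommSemiring S] {m n : ℕ} (h : m ≤ n)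
    (x : S) :
    (ascPochhammer S n).eval x
      = (ascPochhammer S m).eval x * (ascPochhammer S (n - m)).eval (x + m) := by
  have := congrArg (eval x) (ascPochhammer_mul S m (n - m))
  rw [Nat.add_sub_cancel' h] at this
  simpa [eval_comp] using this.symm

theorem tendsto_ascPochhammer_eval_div_pow {x : ℕ → ℝ} {c : ℝ}
    (hx : Tendsto (fun n : ℕ ↦ x n / n) atTop (𝓝 c)) (m : ℕ) :
    Tendsto (fun n : ℕ ↦ (ascPochhammer ℝ m).eval (x n) / (n : ℝ) ^ m) atTop (𝓝 (c ^ m)) := by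
  induction m with
  | zero => simp
  | succ m ih =>
    have hstep : Tendsto (fun n : ℕ ↦ (x n + m) / n) atTop (𝓝 c) := by
      simpa [add_div] using hx.add (tendsto_const_div_atTop_nhds_zero_nat (m : ℝ))
    simpa [ascPochhammer_succ_eval, pow_succ, mul_div_mul_comm] using ih.mul hstep

theorem tendsto_choose_div_pow (m : ℕ) :
    Tendsto (fun n : ℕ ↦ (n.choose m : ℝ) / (n : ℝ) ^ m) atTop (𝓝 (m.factorial : ℝ)⁻¹) := by
  refine ((isEquivalent_choose m).div
    (Asymptotics.IsEquivalent.refl (u := fun n : ℕ ↦ (n : ℝ) ^ m))).symm.tendsto_nhds ?_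
  refine tendsto_const_nhds.congr' ?_
  filter_upwards [eventually_ge_atTop 1] with n hn
  have : (n : ℝ) ^ m ≠ 0 := by positivity
  simp only [Pi.div_apply]
  field_simp

/-- The parameter `b_j^{(n-1)}` of the paper. -/
noncomputable def bShift (r : ℕ) (lam : ℕ → ℕ) (b : ℕ → ℝ) (n j : ℕ) : ℝ :=
  b j + ((⌈(((n : ℤ) - (lam j : ℤ) : ℤ) : ℚ) / (r : ℚ)⌉ : ℤ) : ℝ)

section bShift

variable {r : ℕ} {lam : ℕ → ℕ} {b : ℕ → ℝ}

theorem bShift_pos {n j : ℕ} (hbj : 0 < b j) (hn : lam j ≤ n) : 0 < bShift r lam b n j := by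
  have hq : (0 : ℚ) ≤ (((n : ℤ) - (lam j : ℤ) : ℤ) : ℚ) / (r : ℚ) :=
    div_nonneg (by push_cast; linarith [(Nat.cast_le (α := ℚ)).2 hn]) r.cast_nonneg
  have hceil : (0 : ℝ) ≤ (⌈(((n : ℤ) - (lam j : ℤ) : ℤ) : ℚ) / (r : ℚ)⌉ : ℝ) :=
    mod_cast Int.ceil_nonneg hq
  unfold bShift
  linarith

theorem bShift_mem_Icc (n j : ℕ) :
    bShift r lam b n j
      ∈ Set.Icc (b j + ((n : ℝ) - lam j) / r) (b j + ((n : ℝ) - lam j) / r + 1) := by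
  set q : ℚ := (((n : ℤ) - (lam j : ℤ) : ℤ) : ℚ) / (r : ℚ)
  have hq : (q : ℝ) = ((n : ℝ) - lam j) / r := by push_cast [q]; rfl
  have hlow : (q : ℝ) ≤ (⌈q⌉ : ℝ) := by exact_mod_cast Int.le_ceil q
  have hupp : (⌈q⌉ : ℝ) ≤ q + 1 := by exact_mod_cast (Int.ceil_lt_add_one q).le
  unfold bShift
  constructor <;> linarith

theorem tendsto_bShift_div (hr : 1 ≤ r) (j : ℕ) :
    Tendsto (fun n : ℕ ↦ bShift r lam b n j / n) atTop (𝓝 (r : ℝ)⁻¹) := by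
  have hlim : ∀ d : ℝ, Tendsto (fun n : ℕ ↦ (b j + ((n : ℝ) - lam j) / r + d) / n) atTop
      (𝓝 (r : ℝ)⁻¹) := fun d ↦ by
    have := (tendsto_const_div_atTop_nhds_zero_nat (b j - lam j / r + d)).add_const (r : ℝ)⁻¹
    rw [zero_add] at this
    refine this.congr' ?_
    filter_upwards [eventually_ge_atTop 1] with n hn
    have : (n : ℝ) ≠ 0 := by positivity
    field_simp
    ring
  refine tendsto_of_tendsto_of_tendsto_of_le_of_le' (by simpa using hlim 0) (hlim 1) ?_ ?_
  all_goals
    filter_upwards with n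
    gcongr
  exacts [(bShift_mem_Icc n j).1, (bShift_mem_Icc n j).2]

end bShift

noncomputable def pochhammerProd {ι : Type*} (S : Finset ι) (x : ι → ℝ) (m : ℕ) : ℝ :=
  ∏ i ∈ S, (ascPochhammer ℝ m).eval (x i)

section pochhammerProd

variable {ι : Type*} {S : Finset ι} {x : ι → ℝ}

theorem pochhammerProd_pos (hx : ∀ i ∈ S, 0 < x i) (m : ℕ) : 0 < pochhammerProd S x m :=
  prod_pos fun i hi ↦ ascPochhammer_pos m _ (hx i hi)

theorem pochhammerProd_eq_mul {m n : ℕ} (h : m ≤ n) :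
    pochhammerProd S x n = pochhammerProd S x m * pochhammerProd S (x · + m) (n - m) := by
  simp only [pochhammerProd, ← prod_mul_distrib, ascPochhammer_eval_eq_mul_eval_add h]

theorem pow_prod_le_pochhammerProd (hx : ∀ i ∈ S, 0 < x i) (m : ℕ) :
    (∏ i ∈ S, x i) ^ m ≤ pochhammerProd S x m := by
  rw [← prod_pow]
  exact prod_le_prod (fun i hi ↦ by have := hx i hi; positivity)
    fun i hi ↦ pow_le_ascPochhammer_eval (hx i hi).le m

theorem pochhammerProd_le_prod_pow (hx : ∀ i ∈ S, 0 < x i) {m : ℕ} {y : ι → ℝ}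
    (hxy : ∀ i ∈ S, x i + m ≤ y i) : pochhammerProd S x m ≤ (∏ i ∈ S, y i) ^ m := by
  rw [← prod_pow]
  exact prod_le_prod (fun i hi ↦ (ascPochhammer_pos m _ (hx i hi)).le) fun i hi ↦
    (ascPochhammer_eval_le_pow (hx i hi).le m).trans
      (pow_le_pow_left₀ (by have := hx i hi; positivity) (hxy i hi) m)

end pochhammerProd

noncomputable def mehlerCoeff (r s : ℕ) (lam : ℕ → ℕ) (a b : ℕ → ℝ) (n m : ℕ) : ℝ :=
  n.choose m * pochhammerProd (Icc 1 s) (bShift r lam b n) m /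
    (pochhammerProd (Icc 1 r) a m * (n : ℝ) ^ ((s + 1) * m))

section mehlerCoeff

variable {r s : ℕ} {lam : ℕ → ℕ} {a b : ℕ → ℝ}

theorem mehlerCoeff_of_lt {n m : ℕ} (h : n < m) : mehlerCoeff r s lam a b n m = 0 := by
  simp [mehlerCoeff, Nat.choose_eq_zero_of_lt h]

theorem rescaled_polyP_eq_tsum {n : ℕ} (ha : ∀ i ∈ Icc 1 r, 0 < a i)
    (hβ : ∀ j ∈ Icc 1 s, 0 < bShift r lam b n j) (z : ℂ) :
    (-1 : ℂ) ^ n * ((pochhammerProd (Icc 1 s) (bShift r lam b n) n /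
        pochhammerProd (Icc 1 r) a n : ℝ) : ℂ) *
      aeval (z / (n : ℂ) ^ (s + 1)) (polyP r s lam a b n)
      = ∑' m, (((-1) ^ m * mehlerCoeff r s lam a b n m : ℝ) : ℂ) * z ^ m := by
  rw [tsum_eq_sum (s := range (n + 1)) fun m hm ↦ by
    simp [mehlerCoeff_of_lt (by simpa using hm : n < m)]]
  rw [polyP, map_sum, mul_sum, ← sum_range_reflect]
  refine sum_congr rfl fun m hm ↦ ?_
  have hmn : m ≤ n := Nat.lt_succ_iff.1 (mem_range.1 hm)
  simp only [Nat.add_sub_cancel, map_mul, map_pow, aeval_C, aeval_X, Nat.sub_sub_self hmn,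
    Nat.choose_symm hmn, div_pow, ← pow_mul]
  have hA := pochhammerProd_pos (x := (a · + m)) (fun i hi ↦ by have := ha i hi; positivity)
    (n - m)
  have hB := pochhammerProd_pos (x := (bShift r lam b n · + m))
    (fun j hj ↦ by have := hβ j hj; positivity) (n - m)
  have hsign : (-1 : ℝ) ^ n * (-1) ^ (n - m) = (-1) ^ m := by
    obtain ⟨k, rfl⟩ := Nat.exists_eq_add_of_le hmn
    rw [Nat.add_sub_cancel_left, pow_add, mul_assoc, ← mul_pow]
    norm_num
  have hreal : (-1 : ℝ) ^ n * (pochhammerProd (Icc 1 s) (bShift r lam b n) n /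
        pochhammerProd (Icc 1 r) a n) *
      ((-1) ^ (n - m) * n.choose m * pochhammerProd (Icc 1 r) (a · + m) (n - m) /
        pochhammerProd (Icc 1 s) (bShift r lam b n · + m) (n - m)) / (n : ℝ) ^ ((s + 1) * m)
      = (-1) ^ m * mehlerCoeff r s lam a b n m := by
    rw [pochhammerProd_eq_mul hmn, pochhammerProd_eq_mul (S := Icc 1 r) hmn, mehlerCoeff,
      ← hsign]
    field_simp
  show _ * _ * (algebraMap ℝ ℂ ((-1) ^ (n - m) * n.choose m *
    pochhammerProd (Icc 1 r) (a · + m) (n - m) /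
      pochhammerProd (Icc 1 s) (bShift r lam b n · + m) (n - m)) * _) = _
  rw [← hreal, Complex.coe_algebraMap]
  push_cast
  ring

theorem tendsto_mehlerCoeff (hr : 1 ≤ r) (m : ℕ) :
    Tendsto (fun n ↦ mehlerCoeff r s lam a b n m) atTop
      (𝓝 (((r : ℝ) ^ s)⁻¹ ^ m / (m.factorial * pochhammerProd (Icc 1 r) a m))) := by
  have hprod : Tendsto (fun n : ℕ ↦ ∏ j ∈ Icc 1 s,
      (ascPochhammer ℝ m).eval (bShift r lam b n j) / (n : ℝ) ^ m) atTop
      (𝓝 (∏ _j ∈ Icc 1 s, (r : ℝ)⁻¹ ^ m)) :=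
    tendsto_finsetProd _ fun j _ ↦ tendsto_ascPochhammer_eval_div_pow (tendsto_bShift_div hr j) m
  convert ((tendsto_choose_div_pow m).mul hprod).div_const (pochhammerProd (Icc 1 r) a m)
    using 2 with n
  · rw [mehlerCoeff, pochhammerProd, prod_div_distrib, prod_const, Nat.card_Icc,
      Nat.add_sub_cancel]
    ring
  · rw [prod_const, Nat.card_Icc, Nat.add_sub_cancel]
    ring

theorem abs_mehlerCoeff_le (hr : 1 ≤ r) (ha : ∀ i ∈ Icc 1 r, 0 < a i)
    (hb : ∀ j ∈ Icc 1 s, 0 < b j) {n : ℕ} (hn : 1 ≤ n) (hlam : ∀ j ∈ Icc 1 s, lam j ≤ n)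
    (m : ℕ) :
    |mehlerCoeff r s lam a b n m|
      ≤ ((∏ j ∈ Icc 1 s, (b j + 3)) / ∏ i ∈ Icc 1 r, a i) ^ m / m.factorial := by
  have hA := prod_pos ha
  have hB : 0 < ∏ j ∈ Icc 1 s, (b j + 3) := prod_pos fun j hj ↦ by linarith [hb j hj]
  rcases lt_or_ge n m with hnm | hmn
  · rw [mehlerCoeff_of_lt hnm, abs_zero]
    positivity
  have hβ : ∀ j ∈ Icc 1 s, 0 < bShift r lam b n j := fun j hj ↦ bShift_pos (hb j hj) (hlam j hj)
  have hAm := pochhammerProd_pos ha m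
  have hBm := pochhammerProd_pos hβ m
  have hnR : (1 : ℝ) ≤ n := by exact_mod_cast hn
  have hmR : (m : ℝ) ≤ n := by exact_mod_cast hmn
  have hβm : ∀ j ∈ Icc 1 s, bShift r lam b n j + m ≤ (b j + 3) * n := fun j hj ↦ by
    have hup := (bShift_mem_Icc (r := r) (lam := lam) (b := b) n j).2
    have hdiv : ((n : ℝ) - lam j) / r ≤ n :=
      (div_le_self (by linarith [(Nat.cast_le (α := ℝ)).2 (hlam j hj)])
        (by exact_mod_cast hr)).trans (by linarith [(lam j).cast_nonneg (α := ℝ)])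
    nlinarith [hb j hj]
  have hBle := pochhammerProd_le_prod_pow hβ hβm
  rw [prod_mul_distrib, prod_const, Nat.card_Icc, Nat.add_sub_cancel] at hBle
  rw [abs_of_nonneg (by unfold mehlerCoeff; positivity)]
  calc mehlerCoeff r s lam a b n m
      ≤ (n : ℝ) ^ m / m.factorial * ((∏ j ∈ Icc 1 s, (b j + 3)) * (n : ℝ) ^ s) ^ m /
          ((∏ i ∈ Icc 1 r, a i) ^ m * (n : ℝ) ^ ((s + 1) * m)) := by
        unfold mehlerCoeff
        gcongr
        · exact Nat.choose_le_pow_div m n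
        · exact pow_prod_le_pochhammerProd ha m
    _ = ((∏ j ∈ Icc 1 s, (b j + 3)) / ∏ i ∈ Icc 1 r, a i) ^ m / m.factorial := by
        rw [div_pow]
        field_simp
        ring

end mehlerCoeff

theorem stmt17_general (r s : ℕ) (hr : 1 ≤ r)
    (lam : ℕ → ℕ)
    (hlam1 : ∀ j, 1 ≤ j → j ≤ s → 1 ≤ lam j ∧ lam j ≤ r)
    (a b : ℕ → ℝ)
    (ha : ∀ i, 1 ≤ i → i ≤ r → 0 < a i)
    (hb : ∀ j, 1 ≤ j → j ≤ s → 0 < b j) :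
    ∀ Kc : Set ℂ, IsCompact Kc →
      TendstoUniformlyOn
        (fun (n : ℕ) (z : ℂ) =>
          (-1 : ℂ) ^ n *
            (((∏ j ∈ Finset.Icc 1 s,
                (ascPochhammer ℝ n).eval
                  (b j + ((⌈(((n : ℤ) - (lam j : ℤ) : ℤ) : ℚ) / (r : ℚ)⌉ : ℤ) : ℝ))) /
              ∏ i ∈ Finset.Icc 1 r, (ascPochhammer ℝ n).eval (a i) : ℝ) : ℂ) *
            Polynomial.aeval (z / (n : ℂ) ^ (s + 1)) (polyP r s lam a b n))
        (fun z => ∑' k : ℕ,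
          (-z / (r : ℂ) ^ s) ^ k /
            ((k.factorial : ℂ) *
              ((∏ i ∈ Finset.Icc 1 r, (ascPochhammer ℝ k).eval (a i) : ℝ) : ℂ)))
        Filter.atTop Kc := by
  intro K hK
  have ha' : ∀ i ∈ Icc 1 r, 0 < a i := fun i hi ↦ ha i (mem_Icc.1 hi).1 (mem_Icc.1 hi).2
  have hb' : ∀ j ∈ Icc 1 s, 0 < b j := fun j hj ↦ hb j (mem_Icc.1 hj).1 (mem_Icc.1 hj).2
  have hlam : ∀ n ≥ r, ∀ j ∈ Icc 1 s, lam j ≤ n := fun n hn j hj ↦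
    (hlam1 j (mem_Icc.1 hj).1 (mem_Icc.1 hj).2).2.trans hn
  obtain ⟨R, hKR⟩ := hK.isBounded.subset_closedBall 0
  set C := (∏ j ∈ Icc 1 s, (b j + 3)) / ∏ i ∈ Icc 1 r, a i
  have hbound : ∀ᶠ n in atTop, ∀ m,
      ‖(((-1) ^ m * mehlerCoeff r s lam a b n m : ℝ) : ℂ)‖ ≤ C ^ m / m.factorial := by
    filter_upwards [eventually_ge_atTop r] with n hn m
    rw [Complex.norm_real, Real.norm_eq_abs, abs_mul, abs_pow, abs_neg, abs_one, one_pow, one_mul]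
    exact abs_mehlerCoeff_le hr ha' hb' (hr.trans hn) (hlam n hn) m
  have hunif := tendstoUniformlyOn_tsum_mul_pow_of_dominated (le_max_right R 0)
    (by simpa [mul_pow, div_mul_eq_mul_div] using Real.summable_pow_div_factorial (C * max R 0))
    (fun m ↦ (tendsto_const_nhds.mul (tendsto_mehlerCoeff hr m)).ofReal) hbound
  refine ((hunif.mono (hKR.trans (Metric.closedBall_subset_closedBall (le_max_left _ _)))).congr
    ?_).congr_right ?_
  · filter_upwards [eventually_ge_atTop r] with n hn z _
    exact (rescaled_polyP_eq_tsum ha' (fun j hj ↦ bShift_pos (hb' j hj) (hlam n hn j hj)) z).symm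
  · intro z _
    refine tsum_congr fun m ↦ ?_
    simp only [pochhammerProd]
    push_cast
    ring

/-- Mehler–Heine-type asymptotics near the origin: the rescaled polynomials
`(−1)^n [∏_j (b_j^{(n−1)})_n / ∏_i (a_i)_n] · P_n(z/n^{s+1})` converge, uniformly on
compact subsets of `ℂ`, to the entire function `0F_r(; a_1,…,a_r; −z/r^s)`. -/
theorem stmt17 (r s : ℕ) (hr : 1 ≤ r) (hs : s ≤ r)
    (lam : ℕ → ℕ)
    (hlam1 : ∀ j, 1 ≤ j → j ≤ s → 1 ≤ lam j ∧ lam j ≤ r)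
    (hlam2 : ∀ j j', 1 ≤ j → j < j' → j' ≤ s → lam j < lam j')
    (a b : ℕ → ℝ)
    (ha : ∀ i, 1 ≤ i → i ≤ r → 0 < a i)
    (hb : ∀ j, 1 ≤ j → j ≤ s → 0 < b j)
    (hcond : ∀ i j, 1 ≤ i → i ≤ r → 1 ≤ j → j ≤ s →
      (i ≤ lam j → a i < b j) ∧ (lam j + 1 ≤ i → a i - 1 < b j)) :
    ∀ Kc : Set ℂ, IsCompact Kc →
      TendstoUniformlyOn
        (fun (n : ℕ) (z : ℂ) =>
          (-1 : ℂ) ^ n *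
            (((∏ j ∈ Finset.Icc 1 s,
                (ascPochhammer ℝ n).eval
                  (b j + ((⌈(((n : ℤ) - (lam j : ℤ) : ℤ) : ℚ) / (r : ℚ)⌉ : ℤ) : ℝ))) /
              ∏ i ∈ Finset.Icc 1 r, (ascPochhammer ℝ n).eval (a i) : ℝ) : ℂ) *
            Polynomial.aeval (z / (n : ℂ) ^ (s + 1)) (polyP r s lam a b n))
        (fun z => ∑' k : ℕ,
          (-z / (r : ℂ) ^ s) ^ k /
            ((k.factorial : ℂ) *
              ((∏ i ∈ Finset.Icc 1 r, (ascPochhammer ℝ k).eval (a i) : ℝ) : ℂ)))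
        Filter.atTop Kc :=
  stmt17_general r s hr lam hlam1 a b ha hb
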